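/- Let μ_S and μ_T be probability measures on a measurable space X and let ℓ be a loss function (jointly measurable, nonnegative, symmetric, satisfying the pointwise triangle inequality, bounded by J ≥ 0). Then for all measurable functions f, f*, h : X → ℝ, L_{μ_T}(f, h) ≤ L_{μ_S}(f, h) + L_{μ_S}(f*, h) + L_{μ_T}(f*, h) + |L_{μ_T}(f, f*) − L_{μ_S}(f, f*)|. -/

import Mathlib

open MeasureTheory

/-- Expected loss of a pair of functions under a measure. -/
noncomputable def expLoss {X : Type*} [MeasurableSpace X] (ℓ : ℝ → ℝ → ℝ)
    (μ : Measure X) (f f' : X → ℝ) : ℝ := ∫ x, ℓ (f x) (f' x) ∂μ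

section

variable {X : Type*} [MeasurableSpace X] {ℓ : ℝ → ℝ → ℝ}

theorem integrable_loss_comp {μ : Measure X} [IsFiniteMeasure μ] {J : ℝ}
    (hmeas : Measurable (Function.uncurry ℓ)) (hnonneg : ∀ a b, 0 ≤ ℓ a b)
    (hbound : ∀ a b, ℓ a b ≤ J) {f g : X → ℝ} (hf : Measurable f) (hg : Measurable g) :
    Integrable (fun x => ℓ (f x) (g x)) μ :=
  Integrable.of_bound (hmeas.comp (hf.prodMk hg)).aestronglyMeasurable J <|
    ae_of_all μ fun x => by
      rw [Real.norm_of_nonneg (hnonneg _ _)]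
      exact hbound _ _

theorem expLoss_comm (hsymm : ∀ a b, ℓ a b = ℓ b a) (μ : Measure X) (f g : X → ℝ) :
    expLoss ℓ μ f g = expLoss ℓ μ g f := by
  simp only [expLoss, hsymm (f _)]

theorem expLoss_le_add (htri : ∀ a b c, ℓ a c ≤ ℓ a b + ℓ b c) {μ : Measure X}
    {f g h : X → ℝ} (hfh : Integrable (fun x => ℓ (f x) (h x)) μ)
    (hfg : Integrable (fun x => ℓ (f x) (g x)) μ) (hgh : Integrable (fun x => ℓ (g x) (h x)) μ) :
    expLoss ℓ μ f h ≤ expLoss ℓ μ f g + expLoss ℓ μ g h := by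
  rw [expLoss, expLoss, expLoss, ← integral_add hfg hgh]
  exact integral_mono hfh (hfg.add hgh) fun x => htri _ _ _

end

theorem expLoss_transfer_bound_general {X : Type*} [MeasurableSpace X]
    (μS μT : Measure X) [IsProbabilityMeasure μS] [IsProbabilityMeasure μT]
    (ℓ : ℝ → ℝ → ℝ) (J : ℝ)
    (hmeas : Measurable (Function.uncurry ℓ))
    (hnonneg : ∀ a b, 0 ≤ ℓ a b)
    (hsymm : ∀ a b, ℓ a b = ℓ b a)
    (htri : ∀ a b c, ℓ a c ≤ ℓ a b + ℓ b c)
    (hbound : ∀ a b, ℓ a b ≤ J)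
    (f fstar h : X → ℝ) (hf : Measurable f) (hfstar : Measurable fstar)
    (hh : Measurable h) :
    expLoss ℓ μT f h ≤
      expLoss ℓ μS f h + expLoss ℓ μS fstar h + expLoss ℓ μT fstar h +
        |expLoss ℓ μT f fstar - expLoss ℓ μS f fstar| := by
  have int {μ : Measure X} [IsFiniteMeasure μ] {g g' : X → ℝ} (hg : Measurable g)
      (hg' : Measurable g') : Integrable (fun x => ℓ (g x) (g' x)) μ :=
    integrable_loss_comp hmeas hnonneg hbound hg hg'
  calc expLoss ℓ μT f h ≤ expLoss ℓ μT f fstar + expLoss ℓ μT fstar h :=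
        expLoss_le_add htri (int hf hh) (int hf hfstar) (int hfstar hh)
    _ ≤ expLoss ℓ μS f fstar + |expLoss ℓ μT f fstar - expLoss ℓ μS f fstar| +
          expLoss ℓ μT fstar h := by
        gcongr
        exact sub_le_iff_le_add'.mp (le_abs_self _)
    _ ≤ expLoss ℓ μS f h + expLoss ℓ μS h fstar +
          |expLoss ℓ μT f fstar - expLoss ℓ μS f fstar| + expLoss ℓ μT fstar h := by
        gcongr
        exact expLoss_le_add htri (int hf hfstar) (int hf hh) (int hh hfstar)
    _ = expLoss ℓ μS f h + expLoss ℓ μS fstar h + expLoss ℓ μT fstar h +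
          |expLoss ℓ μT f fstar - expLoss ℓ μS f fstar| := by
        rw [expLoss_comm hsymm μS h fstar]
        ring

/-- Core chain-of-triangle-inequalities step in the proof of Theorem 2.1. -/
theorem expLoss_transfer_bound {X : Type*} [MeasurableSpace X]
    (μS μT : Measure X) [IsProbabilityMeasure μS] [IsProbabilityMeasure μT]
    (ℓ : ℝ → ℝ → ℝ) (J : ℝ) (hJ : 0 ≤ J)
    (hmeas : Measurable (Function.uncurry ℓ))
    (hnonneg : ∀ a b, 0 ≤ ℓ a b)
    (hsymm : ∀ a b, ℓ a b = ℓ b a)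
    (htri : ∀ a b c, ℓ a c ≤ ℓ a b + ℓ b c)
    (hbound : ∀ a b, ℓ a b ≤ J)
    (f fstar h : X → ℝ) (hf : Measurable f) (hfstar : Measurable fstar)
    (hh : Measurable h) :
    expLoss ℓ μT f h ≤
      expLoss ℓ μS f h + expLoss ℓ μS fstar h + expLoss ℓ μT fstar h +
        |expLoss ℓ μT f fstar - expLoss ℓ μS f fstar| :=
  expLoss_transfer_bound_general μS μT ℓ J hmeas hnonneg hsymm htri hbound f fstar h hf hfstar hh
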